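/- There is no 3-connected locally nonforesty graph of order 8k+5 (k ≥ 1) and size 15k+10. -/

import Mathlib

open SimpleGraph

def LocallyNonforesty {V : Type*} (G : SimpleGraph V) : Prop :=
  ∀ v : V, ¬ (G.induce (G.neighborSet v)).IsAcyclic

def ThreeConnected {V : Type*} [Fintype V] (G : SimpleGraph V) : Prop :=
  4 ≤ Fintype.card V ∧ ∀ S : Finset V, S.card ≤ 2 → (G.induce ((↑S : Set V)ᶜ)).Connected

/-!
Discharging. Give every vertex `x` the charge `4 d(x) - 15`, so that the total is
`8 |E| - 15 |V| = 5`. The cycle in `N(v)` makes every degree at least 3 and the neighbourhood of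
a degree-3 vertex a triangle; by 3-connectivity the degree-3 vertices are then independent, so
each can take one unit from each of its neighbours and ends at 0. Every other vertex `x` keeps at
least `3 (d(x) - 4) ≥ 0`: otherwise only two of its neighbours have degree `≠ 3`, and these two
separate `x` and its degree-3 neighbours from the rest. Hence all degrees are at most 5, with at
most one 5. Then five vertices spanning `K₅` minus an edge have degree sum at most 20, so they
send at most two edges out, and at most two vertices separate them from the remaining
`|V| - 5 ≥ 3` vertices. Such five vertices appear around a vertex `p` without degree-3
neighbours: either a degree-4 vertex on the cycle in `N(p)` has a degree-3 neighbour `u`, and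
`{u, p} ∪ N(u)` is one, or the cycles stay among the positively charged vertices, which are then
five vertices of degree 4.
-/

open Finset

namespace SimpleGraph

variable {V : Type*} [Fintype V] [DecidableEq V] {G : SimpleGraph V} [DecidableRel G.Adj]

def MinDegreeTwoOn (G : SimpleGraph V) [DecidableRel G.Adj] (C : Finset V) : Prop :=
  ∀ x ∈ C, 2 ≤ #(G.neighborFinset x ∩ C)

theorem neighborFinset_inter_subset_erase (x : V) (C : Finset V) :
    G.neighborFinset x ∩ C ⊆ C.erase x := fun y hy => by
  rw [mem_inter, mem_neighborFinset] at hy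
  exact mem_erase.mpr ⟨hy.1.ne', hy.2⟩

theorem MinDegreeTwoOn.three_le_card {C : Finset V} (hC : G.MinDegreeTwoOn C)
    (hne : C.Nonempty) : 3 ≤ #C := by
  obtain ⟨x, hx⟩ := hne
  have := card_le_card (neighborFinset_inter_subset_erase (G := G) x C)
  rw [card_erase_of_mem hx] at this
  have := hC x hx
  omega

theorem MinDegreeTwoOn.eq_of_subset {C Q : Finset V} (hC : G.MinDegreeTwoOn C)
    (hne : C.Nonempty) (hCQ : C ⊆ Q) (hQ : #Q ≤ 3) : C = Q :=
  eq_of_subset_of_card_le hCQ (hQ.trans (hC.three_le_card hne))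

theorem MinDegreeTwoOn.isClique_of_card_eq_three {C : Finset V} (hC : G.MinDegreeTwoOn C)
    (h3 : #C = 3) : G.IsClique (C : Set V) := by
  intro x hx y hy hxy
  have heq := eq_of_subset_of_card_le (neighborFinset_inter_subset_erase x C)
    (by rw [card_erase_of_mem hx, h3]; exact hC x hx)
  have : y ∈ G.neighborFinset x ∩ C := heq ▸ mem_erase.mpr ⟨Ne.symm hxy, hy⟩
  exact (mem_neighborFinset _ _ _).mp (mem_inter.mp this).1

theorem exists_minDegreeTwoOn_of_not_isAcyclic {s : Set V} (h : ¬ (G.induce s).IsAcyclic) :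
    ∃ C : Finset V, C.Nonempty ∧ ↑C ⊆ s ∧ G.MinDegreeTwoOn C := by
  simp only [IsAcyclic, not_forall, not_not] at h
  obtain ⟨v, c, hc⟩ := h
  refine ⟨c.support.toFinset.image Subtype.val, ⟨v.1, by simp⟩, ?_, ?_⟩
  · intro x hx
    obtain ⟨y, -, rfl⟩ := mem_image.mp hx
    exact y.2
  · intro x hx
    obtain ⟨y, hy, rfl⟩ := mem_image.mp hx
    have hsub : Subtype.val '' c.toSubgraph.neighborSet y ⊆
        ↑(G.neighborFinset y.1 ∩ c.support.toFinset.image Subtype.val) := by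
      rintro _ ⟨z, hz, rfl⟩
      have hadj : c.toSubgraph.Adj y z := hz
      simp only [coe_inter, coe_neighborFinset, coe_image, Set.mem_inter_iff,
        mem_neighborSet, Set.mem_image, mem_coe, List.mem_toFinset]
      exact ⟨hadj.adj_sub, z, c.mem_verts_toSubgraph.mp hadj.snd_mem, rfl⟩
    have := Set.ncard_le_ncard hsub (finite_toSet _)
    rwa [Set.ncard_image_of_injective _ Subtype.val_injective,
      hc.ncard_neighborSet_toSubgraph_eq_two (List.mem_toFinset.mp hy),
      Set.ncard_coe_finset] at this

end SimpleGraph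

section

variable {V : Type*} [Fintype V] [DecidableEq V] {G : SimpleGraph V} [DecidableRel G.Adj]

theorem LocallyNonforesty.exists_minDegreeTwoOn (hL : LocallyNonforesty G) (v : V) :
    ∃ C ⊆ G.neighborFinset v, C.Nonempty ∧ G.MinDegreeTwoOn C := by
  obtain ⟨C, hne, hsub, hC⟩ := exists_minDegreeTwoOn_of_not_isAcyclic (hL v)
  exact ⟨C, fun x hx => (mem_neighborFinset _ _ _).mpr (hsub hx), hne, hC⟩

theorem LocallyNonforesty.three_le_degree (hL : LocallyNonforesty G) (v : V) :
    3 ≤ G.degree v := by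
  obtain ⟨C, hsub, hne, hC⟩ := hL.exists_minDegreeTwoOn v
  exact (hC.three_le_card hne).trans (card_le_card hsub)

theorem LocallyNonforesty.isClique_neighborSet (hL : LocallyNonforesty G) {u : V}
    (hu : G.degree u = 3) : G.IsClique (G.neighborSet u) := by
  obtain ⟨C, hsub, hne, hC⟩ := hL.exists_minDegreeTwoOn u
  have heq := hC.eq_of_subset hne hsub (by rw [card_neighborFinset_eq_degree, hu])
  rw [← coe_neighborFinset, ← heq]
  exact hC.isClique_of_card_eq_three (by rw [heq, card_neighborFinset_eq_degree, hu])

theorem LocallyNonforesty.erase_subset_neighborFinset (hL : LocallyNonforesty G) {u x : V}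
    (hu : G.degree u = 3) (hux : G.Adj u x) :
    (G.neighborFinset u).erase x ⊆ G.neighborFinset x := fun y hy => by
  obtain ⟨hyx, hy⟩ := mem_erase.mp hy
  rw [mem_neighborFinset] at hy ⊢
  exact hL.isClique_neighborSet hu hux hy (Ne.symm hyx)

theorem ThreeConnected.card_le_of_neighborFinset_subset (hG : ThreeConnected G)
    {S D : Finset V} (hS : #S ≤ 2) (hD : ∀ d ∈ D, G.neighborFinset d ⊆ D ∪ S) {d : V}
    (hd : d ∈ D) (hdS : d ∉ S) : Fintype.card V ≤ #(D ∪ S) := by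
  by_contra hlt
  obtain ⟨v, hv⟩ : ∃ v, v ∉ D ∪ S := by
    by_contra! h
    exact hlt (by rw [eq_univ_of_forall h, card_univ])
  obtain ⟨hvD, hvS⟩ : v ∉ D ∧ v ∉ S := by simpa using hv
  obtain ⟨p⟩ := (hG.2 S hS).preconnected ⟨d, hdS⟩ ⟨v, hvS⟩
  obtain ⟨e, -, he, he'⟩ := p.exists_boundary_dart {x | x.1 ∈ D} hd hvD
  rcases mem_union.mp (hD _ he ((mem_neighborFinset _ _ _).mpr e.adj)) with h | h
  · exact he' h
  · exact e.snd.2 h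

theorem ThreeConnected.three_add_sum_card_neighborFinset_inter_le (hG : ThreeConnected G)
    {D : Finset V} (hD : D.Nonempty) (hcard : #D + 2 < Fintype.card V) :
    3 + ∑ d ∈ D, #(G.neighborFinset d ∩ D) ≤ ∑ d ∈ D, G.degree d := by
  set S := D.biUnion fun d => G.neighborFinset d \ D
  have hS : 3 ≤ #S := by
    by_contra! hS
    obtain ⟨d, hd⟩ := hD
    have hdS : d ∉ S := by simp [S, hd]
    have := hG.card_le_of_neighborFinset_subset (S := S) (by omega) (fun d hd y hy => by
      by_cases hyD : y ∈ D
      · exact mem_union_left _ hyD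
      · exact mem_union_right _ (mem_biUnion.mpr ⟨d, hd, mem_sdiff.mpr ⟨hy, hyD⟩⟩)) hd hdS
    have := card_union_le D S
    omega
  calc 3 + ∑ d ∈ D, #(G.neighborFinset d ∩ D)
      ≤ ∑ d ∈ D, #(G.neighborFinset d \ D) + ∑ d ∈ D, #(G.neighborFinset d ∩ D) := by
        gcongr; exact hS.trans card_biUnion_le
    _ = ∑ d ∈ D, G.degree d := by
        rw [← sum_add_distrib]
        exact sum_congr rfl fun d _ => by
          rw [card_sdiff_add_card_inter, card_neighborFinset_eq_degree]

-- `{a, b} ∪ Q` spans `K₅` minus at most the edge `ab`, so its internal degrees sum to at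
-- least 18.
theorem ThreeConnected.twenty_one_le_degree_add_degree_add_sum_degree (hG : ThreeConnected G)
    (hn : 8 ≤ Fintype.card V) {Q : Finset V} (hQ : #Q = 3) (hQc : G.IsClique (Q : Set V))
    {a b : V} (hab : a ≠ b) (ha : ∀ q ∈ Q, G.Adj a q) (hb : ∀ q ∈ Q, G.Adj b q) :
    21 ≤ G.degree a + G.degree b + ∑ q ∈ Q, G.degree q := by
  have haQ : a ∉ Q := fun h => (ha a h).ne rfl
  have hbQ : b ∉ Q := fun h => (hb b h).ne rfl
  have habQ : a ∉ insert b Q := by simp [hab, haQ]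
  set D := insert a (insert b Q)
  have hD : #D = 5 := by rw [card_insert_of_notMem habQ, card_insert_of_notMem hbQ, hQ]
  have hQD : Q ⊆ D := (subset_insert _ _).trans (subset_insert _ _)
  have hapex : ∀ c, (∀ q ∈ Q, G.Adj c q) → 3 ≤ #(G.neighborFinset c ∩ D) := fun c hc =>
    hQ ▸ card_le_card fun q hq =>
      mem_inter.mpr ⟨(mem_neighborFinset _ _ _).mpr (hc q hq), hQD hq⟩
  have hbase : ∀ q ∈ Q, 4 ≤ #(G.neighborFinset q ∩ D) := fun q hq => by
    have hsub : insert a (insert b (Q.erase q)) ⊆ G.neighborFinset q ∩ D := by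
      intro y hy
      simp only [mem_insert, mem_erase] at hy
      refine mem_inter.mpr ⟨(mem_neighborFinset _ _ _).mpr ?_, ?_⟩
      · rcases hy with rfl | rfl | ⟨hyq, hy⟩
        exacts [(ha q hq).symm, (hb q hq).symm, hQc hq hy (Ne.symm hyq)]
      · rcases hy with rfl | rfl | ⟨-, hy⟩
        exacts [mem_insert_self _ _, mem_insert_of_mem (mem_insert_self _ _), hQD hy]
    have := card_le_card hsub
    rwa [card_insert_of_notMem (by simp [hab, haQ]), card_insert_of_notMem (by simp [hbQ]),
      card_erase_of_mem hq, hQ] at this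
  have key := hG.three_add_sum_card_neighborFinset_inter_le (D := D) ⟨a, mem_insert_self _ _⟩
    (by omega)
  rw [sum_insert habQ, sum_insert hbQ, sum_insert habQ, sum_insert hbQ] at key
  have := sum_le_sum hbase
  simp only [sum_const, hQ, smul_eq_mul] at this
  linarith [hapex a ha, hapex b hb]

theorem ThreeConnected.twenty_one_le_sum_degree (hG : ThreeConnected G)
    (hn : 8 ≤ Fintype.card V) {R : Finset V} (hR : #R = 5)
    (hcore : ∀ p ∈ R, ∃ C ⊆ G.neighborFinset p ∩ R, C.Nonempty ∧ G.MinDegreeTwoOn C) :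
    21 ≤ ∑ p ∈ R, G.degree p := by
  obtain ⟨p, hp, p', hp', hpp', hclique⟩ :
      ∃ p ∈ R, ∃ p' ∈ R, p ≠ p' ∧ (G.Adj p p' → G.IsClique (R : Set V)) := by
    by_cases h : G.IsClique (R : Set V)
    · obtain ⟨p, hp, p', hp', hpp'⟩ := one_lt_card.mp (by omega : 1 < #R)
      exact ⟨p, hp, p', hp', hpp', fun _ => h⟩
    · simp only [IsClique, Set.Pairwise, mem_coe, not_forall] at h
      obtain ⟨p, hp, p', hp', hpp', hnadj⟩ := h
      exact ⟨p, hp, p', hp', hpp', fun h => absurd h hnadj⟩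
  have hp'R : p' ∈ R.erase p := mem_erase.mpr ⟨Ne.symm hpp', hp'⟩
  set Q := (R.erase p).erase p'
  have hQ : #Q = 3 := by rw [card_erase_of_mem hp'R, card_erase_of_mem hp, hR]
  have hQR : Q ⊆ R := (erase_subset _ _).trans (erase_subset _ _)
  have hcoreQ : ∀ a ∈ R, ∀ b ∈ R, a ≠ b → ¬ G.Adj a b →
      (R.erase a).erase b ⊆ G.neighborFinset a ∧ G.MinDegreeTwoOn ((R.erase a).erase b) := by
    intro a ha b hb hab hnadj
    obtain ⟨C, hCsub, hne, hC⟩ := hcore a ha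
    have heq := hC.eq_of_subset (Q := (R.erase a).erase b) hne (fun c hc => by
      obtain ⟨hac, hcR⟩ := mem_inter.mp (hCsub hc)
      rw [mem_neighborFinset] at hac
      exact mem_erase.mpr ⟨fun h => hnadj (h ▸ hac), mem_erase.mpr ⟨hac.ne', hcR⟩⟩)
      (by rw [card_erase_of_mem (mem_erase.mpr ⟨Ne.symm hab, hb⟩), card_erase_of_mem ha, hR])
    exact ⟨heq ▸ hCsub.trans inter_subset_left, heq ▸ hC⟩
  have key : G.IsClique (Q : Set V) ∧ (∀ q ∈ Q, G.Adj p q) ∧ ∀ q ∈ Q, G.Adj p' q := by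
    by_cases hadj : G.Adj p p'
    · have hc := hclique hadj
      have hne : ∀ q ∈ Q, q ≠ p ∧ q ≠ p' := fun q hq => by
        simp only [Q, mem_erase] at hq; exact ⟨hq.2.1, hq.1⟩
      exact ⟨hc.subset (coe_subset.mpr hQR),
        fun q hq => hc hp (hQR hq) (hne q hq).1.symm,
        fun q hq => hc hp' (hQR hq) (hne q hq).2.symm⟩
    · obtain ⟨hQp, hQc⟩ := hcoreQ p hp p' hp' hpp' hadj
      obtain ⟨hQp', -⟩ := hcoreQ p' hp' p hp (Ne.symm hpp') (fun h => hadj h.symm)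
      rw [erase_right_comm] at hQp'
      exact ⟨hQc.isClique_of_card_eq_three hQ,
        fun q hq => (mem_neighborFinset _ _ _).mp (hQp hq),
        fun q hq => (mem_neighborFinset _ _ _).mp (hQp' hq)⟩
  rw [← add_sum_erase R _ hp, ← add_sum_erase _ _ hp'R, ← add_assoc]
  exact hG.twenty_one_le_degree_add_degree_add_sum_degree hn hQ key.1 hpp' key.2.1 key.2.2

theorem ThreeConnected.not_adj_of_degree_eq_three (hG : ThreeConnected G)
    (hL : LocallyNonforesty G) (hn : 5 ≤ Fintype.card V) {u v : V} (hu : G.degree u = 3)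
    (hv : G.degree v = 3) : ¬ G.Adj u v := by
  intro huv
  set S := (G.neighborFinset u).erase v
  have hS : #S = 2 := by
    rw [card_erase_of_mem ((mem_neighborFinset _ _ _).mpr huv), card_neighborFinset_eq_degree, hu]
  have hSv : S = (G.neighborFinset v).erase u := by
    refine eq_of_subset_of_card_le (fun y hy => mem_erase.mpr ⟨?_, ?_⟩) ?_
    · exact ((mem_neighborFinset _ _ _).mp (mem_of_mem_erase hy)).ne'
    · exact hL.erase_subset_neighborFinset hu huv hy
    · rw [card_erase_of_mem ((mem_neighborFinset _ _ _).mpr huv.symm),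
        card_neighborFinset_eq_degree, hv, hS]
  have hclosed : ∀ d ∈ ({u, v} : Finset V), G.neighborFinset d ⊆ {u, v} ∪ S := by
    intro d hd y hy
    by_cases hyuv : y = u ∨ y = v
    · simp only [mem_union, mem_insert, mem_singleton]; tauto
    push Not at hyuv
    refine mem_union_right _ ?_
    rcases mem_insert.mp hd with rfl | hd
    · exact mem_erase.mpr ⟨hyuv.2, hy⟩
    · rw [mem_singleton.mp hd] at hy
      exact hSv ▸ mem_erase.mpr ⟨hyuv.1, hy⟩
  have := hG.card_le_of_neighborFinset_subset hS.le hclosed (mem_insert_self u {v})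
    fun h => G.notMem_neighborFinset_self u (mem_of_mem_erase h)
  have := card_union_le {u, v} S
  have := card_le_two (a := u) (b := v)
  omega

end

namespace SimpleGraph

variable {V : Type*} [Fintype V] (G : SimpleGraph V) [DecidableRel G.Adj]

def threeNeighborFinset (x : V) : Finset V := {u ∈ G.neighborFinset x | G.degree u = 3}

/-- The initial charge `4 d(x) - 15` (in total `8 |E| - 15 |V|`), after every vertex of degree 3
has taken one unit from each of its neighbours. -/
def charge (x : V) : ℤ := 4 * G.degree x - 15 - #(G.threeNeighborFinset x)

theorem sum_card_threeNeighborFinset :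
    ∑ x, #(G.threeNeighborFinset x) = 3 * #{u | G.degree u = 3} := by
  have h := sum_card_bipartiteAbove_eq_sum_card_bipartiteBelow (s := univ)
    (t := ({u | G.degree u = 3} : Finset V)) (r := G.Adj)
  convert h using 1
  · refine sum_congr rfl fun x _ => congrArg card ?_
    ext u
    simp [threeNeighborFinset, bipartiteAbove, and_comm]
  · rw [mul_comm, ← smul_eq_mul, ← sum_const]
    refine sum_congr rfl fun u hu => ?_
    rw [(mem_filter.mp hu).2.symm, ← card_neighborFinset_eq_degree]
    congr 1
    ext x
    simp [bipartiteBelow, adj_comm]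

theorem sum_charge (hind : ∀ u v, G.degree u = 3 → G.degree v = 3 → ¬ G.Adj u v) :
    ∑ x ∈ {x | G.degree x ≠ 3}, G.charge x = 8 * #G.edgeFinset - 15 * Fintype.card V := by
  have hall : ∑ x, G.charge x =
      8 * #G.edgeFinset - 15 * Fintype.card V - 3 * #{u | G.degree u = 3} := by
    simp only [charge, sum_sub_distrib, ← mul_sum, sum_const, card_univ, nsmul_eq_mul]
    push_cast [← Nat.cast_sum, G.sum_degrees_eq_twice_card_edges,
      G.sum_card_threeNeighborFinset]
    ring
  have hthree : ∑ x ∈ {x | G.degree x = 3}, G.charge x = -3 * #{u | G.degree u = 3} := by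
    rw [mul_comm, ← nsmul_eq_mul, ← sum_const]
    refine sum_congr rfl fun x hx => ?_
    have hx3 := (mem_filter.mp hx).2
    have : G.threeNeighborFinset x = ∅ := filter_eq_empty_iff.mpr fun u hu hu3 =>
      hind x u hx3 hu3 ((mem_neighborFinset _ _ _).mp hu)
    simp [charge, hx3, this]
  have := sum_filter_add_sum_filter_not univ (fun x => G.degree x = 3) G.charge
  linarith

end SimpleGraph

section

variable {V : Type*} [Fintype V] [DecidableEq V] {G : SimpleGraph V} [DecidableRel G.Adj]

theorem LocallyNonforesty.card_threeNeighborFinset_add_two_le (hL : LocallyNonforesty G)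
    (hind : ∀ u v, G.degree u = 3 → G.degree v = 3 → ¬ G.Adj u v) (x : V) :
    #(G.threeNeighborFinset x) + 2 ≤ G.degree x := by
  obtain ⟨C, hCx, hne, hC⟩ := hL.exists_minDegreeTwoOn x
  have hsplit := card_filter_add_card_filter_not (s := G.neighborFinset x) (G.degree · = 3)
  simp only [← ne_eq, card_neighborFinset_eq_degree] at hsplit
  have hCsub : {c ∈ C | G.degree c ≠ 3} ⊆ {u ∈ G.neighborFinset x | G.degree u ≠ 3} :=
    filter_subset_filter _ hCx
  have hC2 : 2 ≤ #{c ∈ C | G.degree c ≠ 3} := by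
    by_cases h : ∃ c ∈ C, G.degree c = 3
    · obtain ⟨c, hc, hc3⟩ := h
      refine (hC c hc).trans (card_le_card fun y hy => ?_)
      obtain ⟨hcy, hy⟩ := mem_inter.mp hy
      exact mem_filter.mpr ⟨hy, fun hy3 => hind c y hc3 hy3 ((mem_neighborFinset _ _ _).mp hcy)⟩
    · push Not at h
      rw [filter_true_of_mem h]
      have := hC.three_le_card hne
      omega
  have := card_le_card hCsub
  simp only [threeNeighborFinset] at hsplit ⊢
  omega

theorem ThreeConnected.card_threeNeighborFinset_add_three_le (hG : ThreeConnected G)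
    (hL : LocallyNonforesty G) (hind : ∀ u v, G.degree u = 3 → G.degree v = 3 → ¬ G.Adj u v)
    {x : V} (hx : G.degree x + 2 ≤ Fintype.card V) :
    #(G.threeNeighborFinset x) + 3 ≤ G.degree x := by
  by_contra hlt
  have h2 := hL.card_threeNeighborFinset_add_two_le hind x
  set F := G.threeNeighborFinset x
  set T : Finset V := {u ∈ G.neighborFinset x | G.degree u ≠ 3}
  have hT : #T = 2 := by
    have := card_filter_add_card_filter_not (s := G.neighborFinset x) (G.degree · = 3)
    simp only [← ne_eq, card_neighborFinset_eq_degree] at this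
    change #F + #T = G.degree x at this
    omega
  have hclosed : ∀ d ∈ insert x F, G.neighborFinset d ⊆ insert x F ∪ T := by
    intro d hd y hy
    rcases mem_insert.mp hd with rfl | hdF
    · by_cases hy3 : G.degree y = 3
      · exact mem_union_left _ (mem_insert_of_mem (mem_filter.mpr ⟨hy, hy3⟩))
      · exact mem_union_right _ (mem_filter.mpr ⟨hy, hy3⟩)
    · obtain ⟨hxd, hd3⟩ := mem_filter.mp hdF
      rw [mem_neighborFinset] at hxd hy
      by_cases hyx : y = x
      · exact mem_union_left _ (hyx ▸ mem_insert_self _ _)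
      refine mem_union_right _ (mem_filter.mpr ⟨?_, fun hy3 => hind d y hd3 hy3 hy⟩)
      exact hL.erase_subset_neighborFinset hd3 hxd.symm
        (mem_erase.mpr ⟨hyx, (mem_neighborFinset _ _ _).mpr hy⟩)
  have := hG.card_le_of_neighborFinset_subset hT.le hclosed (mem_insert_self x F)
    fun h => G.notMem_neighborFinset_self x (mem_filter.mp h).1
  have := card_union_le (insert x F) T
  have := card_insert_le x F
  omega

theorem ThreeConnected.charge_nonneg (hG : ThreeConnected G) (hL : LocallyNonforesty G)
    (hind : ∀ u v, G.degree u = 3 → G.degree v = 3 → ¬ G.Adj u v) (hn : 6 ≤ Fintype.card V)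
    {x : V} (hx : G.degree x ≠ 3) : 0 ≤ G.charge x := by
  have := hL.three_le_degree x
  have := hL.card_threeNeighborFinset_add_two_le hind x
  unfold charge
  by_cases h4 : G.degree x = 4
  · have := hG.card_threeNeighborFinset_add_three_le hL hind (x := x) (by omega)
    omega
  · omega

theorem ThreeConnected.three_mul_degree_sub_four_le_charge (hG : ThreeConnected G)
    (hL : LocallyNonforesty G) (hn : 8 ≤ Fintype.card V)
    (hcharge : ∑ x ∈ {x | G.degree x ≠ 3}, G.charge x = 5) {x : V} (hx : G.degree x ≠ 3) :
    3 * ((G.degree x : ℤ) - 4) ≤ G.charge x := by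
  have hind u v := hG.not_adj_of_degree_eq_three hL (u := u) (v := v) (by omega)
  have hle : G.charge x ≤ 5 := hcharge ▸ single_le_sum
    (fun y hy => hG.charge_nonneg hL hind (by omega) (mem_filter.mp hy).2)
    (mem_filter.mpr ⟨mem_univ x, hx⟩)
  have := hL.card_threeNeighborFinset_add_two_le hind x
  unfold charge at hle ⊢
  have := hG.card_threeNeighborFinset_add_three_le hL hind (x := x) (by omega)
  omega

theorem ThreeConnected.sum_degree_le (hG : ThreeConnected G) (hL : LocallyNonforesty G)
    (hn : 8 ≤ Fintype.card V) (hcharge : ∑ x ∈ {x | G.degree x ≠ 3}, G.charge x = 5)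
    (T : Finset V) : ∑ t ∈ T, (G.degree t : ℤ) ≤ 4 * #T + 1 := by
  have hind u v := hG.not_adj_of_degree_eq_three hL (u := u) (v := v) (by omega)
  have hfilter : ∑ t ∈ T, ((G.degree t : ℤ) - 4) ≤
      ∑ t ∈ T with G.degree t ≠ 3, ((G.degree t : ℤ) - 4) := by
    rw [sum_filter]
    refine sum_le_sum fun t _ => ?_
    split_ifs with h
    · rfl
    · rw [not_not.mp h]; norm_num
  have hthree : 3 * ∑ t ∈ T with G.degree t ≠ 3, ((G.degree t : ℤ) - 4) ≤ 5 := by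
    rw [mul_sum, ← hcharge]
    calc ∑ t ∈ T with G.degree t ≠ 3, 3 * ((G.degree t : ℤ) - 4)
        ≤ ∑ t ∈ T with G.degree t ≠ 3, G.charge t := sum_le_sum fun t ht =>
          hG.three_mul_degree_sub_four_le_charge hL hn hcharge (mem_filter.mp ht).2
      _ ≤ ∑ x ∈ {x | G.degree x ≠ 3}, G.charge x :=
          sum_le_sum_of_subset_of_nonneg (filter_subset_filter _ (subset_univ T))
            fun y hy _ => hG.charge_nonneg hL hind (by omega) (mem_filter.mp hy).2
  rw [sum_sub_distrib, sum_const, nsmul_eq_mul] at hfilter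
  omega

theorem ThreeConnected.exists_threeNeighborFinset_eq_empty (hG : ThreeConnected G)
    (hL : LocallyNonforesty G) (hn : 8 ≤ Fintype.card V)
    (hcharge : ∑ x ∈ {x | G.degree x ≠ 3}, G.charge x = 5) :
    ∃ p, G.degree p ≠ 3 ∧ G.threeNeighborFinset p = ∅ := by
  by_contra! h
  have hle : ∀ x ∈ ({x | G.degree x ≠ 3} : Finset V),
      G.charge x ≤ 4 * ((G.degree x : ℤ) - 4) := fun x hx => by
    have := card_pos.mpr (h x (mem_filter.mp hx).2)
    unfold charge
    omega
  have := sum_le_sum hle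
  rw [hcharge, ← mul_sum, sum_sub_distrib, sum_const, nsmul_eq_mul] at this
  have := hG.sum_degree_le hL hn hcharge {x | G.degree x ≠ 3}
  omega

theorem ThreeConnected.threeNeighborFinset_eq_empty_of_degree_eq_four (hG : ThreeConnected G)
    (hL : LocallyNonforesty G) (hn : 8 ≤ Fintype.card V)
    (hcharge : ∑ x ∈ {x | G.degree x ≠ 3}, G.charge x = 5) {p : V} (hp : G.degree p ≠ 3)
    (hp0 : G.threeNeighborFinset p = ∅) {C : Finset V} (hCp : C ⊆ G.neighborFinset p)
    (hC : G.MinDegreeTwoOn C) {x : V} (hx : x ∈ C) (hx4 : G.degree x = 4) :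
    G.threeNeighborFinset x = ∅ := by
  by_contra hne
  obtain ⟨u, hu⟩ := nonempty_iff_ne_empty.mpr hne
  obtain ⟨hxu, hu3⟩ := mem_filter.mp hu
  rw [mem_neighborFinset] at hxu
  have hpx : G.Adj p x := (mem_neighborFinset _ _ _).mp (hCp hx)
  have hpu : ¬ G.Adj p u := fun h => (eq_empty_iff_forall_notMem.mp hp0) u
    (mem_filter.mpr ⟨(mem_neighborFinset _ _ _).mpr h, hu3⟩)
  have hpNu : p ∉ G.neighborFinset u := fun h => hpu ((mem_neighborFinset _ _ _).mp h).symm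
  have hcard_erase : #((G.neighborFinset u).erase x) = 2 := by
    rw [card_erase_of_mem ((mem_neighborFinset _ _ _).mpr hxu.symm),
      card_neighborFinset_eq_degree, hu3]
  have hNx : G.neighborFinset x = insert p (insert u ((G.neighborFinset u).erase x)) := by
    refine (eq_of_subset_of_card_le (insert_subset ((mem_neighborFinset _ _ _).mpr hpx.symm)
      (insert_subset ((mem_neighborFinset _ _ _).mpr hxu)
        (hL.erase_subset_neighborFinset hu3 hxu.symm))) ?_).symm
    rw [card_insert_of_notMem, card_insert_of_notMem, hcard_erase,
      card_neighborFinset_eq_degree, hx4]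
    · exact fun h => G.notMem_neighborFinset_self u (mem_of_mem_erase h)
    · simp only [mem_insert, not_or]
      exact ⟨fun h => hp (h ▸ hu3), fun h => hpNu (mem_of_mem_erase h)⟩
  -- The two neighbours of `x` in `C` can only be the other two neighbours of `u`, so `p` is
  -- adjacent to the whole triangle `N(u)`, and `{u, p} ∪ N(u)` has too small a degree sum.
  have hNxC : G.neighborFinset x ∩ C ⊆ (G.neighborFinset u).erase x := fun t ht => by
    obtain ⟨htx, htC⟩ := mem_inter.mp ht
    have htp : G.Adj p t := (mem_neighborFinset _ _ _).mp (hCp htC)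
    rw [hNx, mem_insert, mem_insert] at htx
    rcases htx with rfl | rfl | h
    exacts [absurd htp (G.loopless.irrefl t), absurd htp hpu, h]
  have hNuC : (G.neighborFinset u).erase x ⊆ C :=
    (eq_of_subset_of_card_le hNxC (hcard_erase ▸ hC x hx)) ▸ inter_subset_right
  have hpNu' : ∀ q ∈ G.neighborFinset u, G.Adj p q := fun q hq => by
    by_cases hqx : q = x
    · exact hqx ▸ hpx
    · exact (mem_neighborFinset _ _ _).mp (hCp (hNuC (mem_erase.mpr ⟨hqx, hq⟩)))
  have h21 := hG.twenty_one_le_degree_add_degree_add_sum_degree hn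
    (by rwa [card_neighborFinset_eq_degree])
    (by rw [coe_neighborFinset]; exact hL.isClique_neighborSet hu3)
    (by rintro rfl; exact hp hu3) (fun q hq => (mem_neighborFinset _ _ _).mp hq) hpNu'
  have h17 := hG.sum_degree_le hL hn hcharge (insert p (G.neighborFinset u))
  rw [sum_insert hpNu, card_insert_of_notMem hpNu, card_neighborFinset_eq_degree, hu3,
    ← Nat.cast_sum] at h17
  omega

theorem LocallyNonforesty.charge_pos (hL : LocallyNonforesty G) {p : V} (hp : G.degree p ≠ 3)
    (hp0 : G.threeNeighborFinset p = ∅) : 0 < G.charge p := by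
  have := hL.three_le_degree p
  simp only [charge, hp0, card_empty, Nat.cast_zero]
  omega

theorem ThreeConnected.sum_charge_of_pos (hG : ThreeConnected G) (hL : LocallyNonforesty G)
    (hn : 8 ≤ Fintype.card V) (hcharge : ∑ x ∈ {x | G.degree x ≠ 3}, G.charge x = 5) :
    ∑ x ∈ {x | 0 < G.charge x}, G.charge x = 5 := by
  have hind u v := hG.not_adj_of_degree_eq_three hL (u := u) (v := v) (by omega)
  rw [← hcharge]
  refine sum_subset (fun x hx => mem_filter.mpr ⟨mem_univ x, fun h3 => ?_⟩) fun x hx hpos => ?_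
  · have := (mem_filter.mp hx).2
    simp only [charge, h3] at this
    omega
  · have := hG.charge_nonneg hL hind (by omega) (mem_filter.mp hx).2
    simp only [mem_filter, mem_univ, true_and, not_lt] at hpos
    omega

theorem ThreeConnected.exists_minDegreeTwoOn_subset_pos (hG : ThreeConnected G)
    (hL : LocallyNonforesty G) (hn : 8 ≤ Fintype.card V)
    (hcharge : ∑ x ∈ {x | G.degree x ≠ 3}, G.charge x = 5) {p : V} (hp : G.degree p ≠ 3)
    (hp0 : G.threeNeighborFinset p = ∅) :
    ∃ C ⊆ G.neighborFinset p ∩ ({x | 0 < G.charge x} : Finset V),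
      C.Nonempty ∧ G.MinDegreeTwoOn C := by
  obtain ⟨C, hCp, hne, hC⟩ := hL.exists_minDegreeTwoOn p
  refine ⟨C, fun x hx => mem_inter.mpr ⟨hCp hx, mem_filter.mpr ⟨mem_univ x, ?_⟩⟩,
    hne, hC⟩
  have hx3 : G.degree x ≠ 3 := fun h =>
    (eq_empty_iff_forall_notMem.mp hp0) x (mem_filter.mpr ⟨hCp hx, h⟩)
  by_cases hx4 : G.degree x = 4
  · exact hL.charge_pos hx3
      (hG.threeNeighborFinset_eq_empty_of_degree_eq_four hL hn hcharge hp hp0 hCp hC hx hx4)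
  · have := hL.three_le_degree x
    have := hG.three_mul_degree_sub_four_le_charge hL hn hcharge hx3
    omega

theorem ThreeConnected.charge_eq_one_of_pos (hG : ThreeConnected G) (hL : LocallyNonforesty G)
    (hn : 8 ≤ Fintype.card V) (hcharge : ∑ x ∈ {x | G.degree x ≠ 3}, G.charge x = 5)
    (hR : 4 ≤ #({x | 0 < G.charge x} : Finset V)) {x : V} (hx : 0 < G.charge x) :
    G.charge x = 1 ∧ G.degree x = 4 ∧ G.threeNeighborFinset x = ∅ := by
  have hxR : x ∈ ({x | 0 < G.charge x} : Finset V) := mem_filter.mpr ⟨mem_univ x, hx⟩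
  have hle : G.charge x + #(({x | 0 < G.charge x} : Finset V).erase x) ≤ 5 := by
    rw [← hG.sum_charge_of_pos hL hn hcharge, ← add_sum_erase _ _ hxR, card_eq_sum_ones,
      Nat.cast_sum]
    gcongr with y hy
    exact (mem_filter.mp (mem_of_mem_erase hy)).2
  rw [card_erase_of_mem hxR] at hle
  have hx3 : G.degree x ≠ 3 := fun h3 => by simp only [charge, h3] at hx; omega
  have := hG.three_mul_degree_sub_four_le_charge hL hn hcharge hx3
  have := hL.three_le_degree x
  unfold charge at *
  exact ⟨by omega, by omega, card_eq_zero.mp (by omega)⟩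

theorem ThreeConnected.eight_mul_card_edgeFinset_ne (hG : ThreeConnected G)
    (hL : LocallyNonforesty G) (hn : 8 ≤ Fintype.card V) :
    8 * #G.edgeFinset ≠ 15 * Fintype.card V + 5 := by
  intro hm
  have hcharge : ∑ x ∈ {x | G.degree x ≠ 3}, G.charge x = 5 := by
    rw [G.sum_charge fun u v => hG.not_adj_of_degree_eq_three hL (by omega)]
    omega
  set R : Finset V := {x | 0 < G.charge x}
  obtain ⟨p, hp, hp0⟩ := hG.exists_threeNeighborFinset_eq_empty hL hn hcharge
  obtain ⟨C, hCR, hne, hC⟩ := hG.exists_minDegreeTwoOn_subset_pos hL hn hcharge hp hp0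
  have hR4 : 4 ≤ #R := by
    have hpC : p ∉ C := fun h => G.notMem_neighborFinset_self p (mem_inter.mp (hCR h)).1
    have hpR : p ∈ R := mem_filter.mpr ⟨mem_univ p, hL.charge_pos hp hp0⟩
    have := card_le_card (insert_subset hpR fun x hx => (mem_inter.mp (hCR hx)).2)
    rw [card_insert_of_notMem hpC] at this
    have := hC.three_le_card hne
    omega
  have hR x (hx : x ∈ R) := hG.charge_eq_one_of_pos hL hn hcharge hR4 (mem_filter.mp hx).2
  have hR5 : #R = 5 := by
    have := hG.sum_charge_of_pos hL hn hcharge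
    rw [sum_congr rfl fun x hx => (hR x hx).1, sum_const, nsmul_one] at this
    exact_mod_cast this
  have h21 := hG.twenty_one_le_sum_degree hn hR5 fun q hq =>
    hG.exists_minDegreeTwoOn_subset_pos hL hn hcharge (by rw [(hR q hq).2.1]; decide)
      (hR q hq).2.2
  rw [sum_congr rfl fun x hx => (hR x hx).2.1, sum_const, hR5, smul_eq_mul] at h21
  omega

end

theorem stmt13 (k : ℕ) (hk : 1 ≤ k) :
    ¬ ∃ G : SimpleGraph (Fin (8 * k + 5)), ThreeConnected G ∧ LocallyNonforesty G ∧
      G.edgeSet.ncard = 15 * k + 10 := by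
  rintro ⟨G, hG, hL, hm⟩
  classical
  refine hG.eight_mul_card_edgeFinset_ne hL (by rw [Fintype.card_fin]; omega) ?_
  rw [← coe_edgeFinset, Set.ncard_coe_finset] at hm
  rw [hm, Fintype.card_fin]
  ring
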